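/- arXiv:2010.04492 — 3 statements merged into one kernel-verified Lean document; each statement's English description precedes it below -/
import Mathlib

section
/- With Y_t := X_t(1 − X_{t−1}) as above, E(Y_t · Y_{t+1}) = 0, and for every k ≥ 2, E(Y_t · Y_{t+k}) = (α^2 β^2 / (α+β)^2)·(1 − (1 − α − β)^{k−1}). Consequently Cov(Y_t, Y_{t+k}) = −(α^2 β^2/(α+β)^2)·(1−α−β)^{k−1} for all k ≥ 1. -/
/-!
`Y s` is the indicator of the up-jump `{X s = 0, X (s + 1) = 1}`. The Markov property, given on
cylinders, extends to every event `A` determined by `X 0, …, X t`, a countable disjoint union of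
cylinders: `P(A ∩ {X (t+1) = 1}) = (1 - β) P(A ∩ {X t = 1}) + α P(A ∩ {X t = 0})`. Iterating,
`P(A ∩ {X (s+k) = 1}) = π P(A) + λ^k (P(A ∩ {X s = 1}) - π P(A))` with `π = α / (α + β)` and
`λ = 1 - α - β`. For `A = Ω` this is stationarity. For `A` the up-jump at `t` it gives
`P(A ∩ {X (t+k+2) = 0})`, and one more step from `0` to `1` gives `E(Y t * Y (t+k+2))`.
-/

open MeasureTheory ProbabilityTheory

section TwoStateChain

variable {Ω : Type*}

structure IsTwoStateMarkovChain [MeasurableSpace Ω] (μ : Measure Ω) (X : ℕ → Ω → ℕ) (α β : ℝ) :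
    Prop where
  measurable : ∀ t, Measurable (X t)
  le_one : ∀ t ω, X t ω ≤ 1
  cond_cylinder : ∀ (t : ℕ) (x : ℕ → ℕ),
    μ {ω | ∀ i ≤ t, X i ω = x i} ≠ 0 →
    cond μ {ω | ∀ i ≤ t, X i ω = x i} {ω | X (t + 1) ω = 1}
      = if x t = 1 then ENNReal.ofReal (1 - β) else ENNReal.ofReal α

def IsPastEvent (X : ℕ → Ω → ℕ) (t : ℕ) (A : Set Ω) : Prop :=
  ∀ ω ω', (∀ i ≤ t, X i ω = X i ω') → ω ∈ A → ω' ∈ A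

section PastEvent

variable {X : ℕ → Ω → ℕ} {s t : ℕ} {A B : Set Ω}

lemma IsPastEvent.mono (hA : IsPastEvent X s A) (hst : s ≤ t) : IsPastEvent X t A :=
  fun ω ω' h ↦ hA ω ω' fun i hi ↦ h i (hi.trans hst)

lemma IsPastEvent.inter (hA : IsPastEvent X t A) (hB : IsPastEvent X t B) :
    IsPastEvent X t (A ∩ B) :=
  fun ω ω' h hω ↦ ⟨hA ω ω' h hω.1, hB ω ω' h hω.2⟩

lemma isPastEvent_setOf_eq (hst : s ≤ t) (b : ℕ) : IsPastEvent X t {ω | X s ω = b} :=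
  fun _ _ h hω ↦ (h s hst).symm.trans hω

-- Indexed by `Fin (t + 1)` so that the histories form a countable type.
def history (X : ℕ → Ω → ℕ) (t : ℕ) (ω : Ω) : Fin (t + 1) → ℕ := fun i ↦ X i ω

lemma IsPastEvent.preimage_image_history (hA : IsPastEvent X t A) :
    history X t ⁻¹' (history X t '' A) = A := by
  refine Set.Subset.antisymm ?_ (Set.subset_preimage_image _ _)
  rintro ω' ⟨ω, hω, hωω'⟩
  exact hA ω ω' (fun i hi ↦ congrFun hωω' ⟨i, Nat.lt_succ_of_le hi⟩) hω

lemma history_preimage_singleton (t : ℕ) (ω₀ : Ω) :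
    history X t ⁻¹' {history X t ω₀} = {ω | ∀ i ≤ t, X i ω = X i ω₀} := by
  ext ω
  simp only [Set.mem_preimage, Set.mem_singleton_iff, Set.mem_ofPred_eq, funext_iff, history]
  exact ⟨fun H i hi ↦ H ⟨i, Nat.lt_succ_of_le hi⟩, fun H i ↦ H i (Nat.lt_succ_iff.mp i.isLt)⟩

def upcrossing (X : ℕ → Ω → ℕ) (s : ℕ) : Set Ω := {ω | X s ω = 0 ∧ X (s + 1) ω = 1}

lemma isPastEvent_upcrossing (s : ℕ) : IsPastEvent X (s + 1) (upcrossing X s) :=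
  (isPastEvent_setOf_eq (Nat.le_succ s) 0).inter (isPastEvent_setOf_eq le_rfl 1)

lemma upcrossing_inter_upcrossing_succ (s : ℕ) :
    upcrossing X s ∩ upcrossing X (s + 1) = ∅ :=
  Set.eq_empty_of_forall_notMem fun _ h ↦ by
    simp only [upcrossing, Set.mem_inter_iff, Set.mem_ofPred_eq] at h
    omega

lemma indicator_upcrossing_apply (hX : ∀ t ω, X t ω ≤ 1) (s : ℕ) (ω : Ω) :
    (upcrossing X s).indicator 1 ω = (X (s + 1) ω : ℝ) * (1 - X s ω) := by
  rcases Nat.le_one_iff_eq_zero_or_eq_one.1 (hX s ω) with h | h <;>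
  rcases Nat.le_one_iff_eq_zero_or_eq_one.1 (hX (s + 1) ω) with h' | h' <;>
  simp [upcrossing, h, h']

end PastEvent

section Chain

variable [MeasurableSpace Ω] {μ : Measure Ω} {X : ℕ → Ω → ℕ} {α β : ℝ} {t : ℕ} {A : Set Ω}

lemma measurable_history (hX : ∀ t, Measurable (X t)) (t : ℕ) : Measurable (history X t) :=
  measurable_pi_lambda _ fun i ↦ hX i

lemma IsPastEvent.measurableSet (hX : ∀ t, Measurable (X t)) (hA : IsPastEvent X t A) :
    MeasurableSet A := by
  rw [← hA.preimage_image_history]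
  exact measurable_history hX t (Set.to_countable _).measurableSet

namespace IsTwoStateMarkovChain

lemma measurableSet_eq (hX : IsTwoStateMarkovChain μ X α β) (t b : ℕ) :
    MeasurableSet {ω | X t ω = b} :=
  hX.measurable t (measurableSet_singleton b)

lemma eq_zero_or_eq_one (hX : IsTwoStateMarkovChain μ X α β) (t : ℕ) (ω : Ω) :
    X t ω = 0 ∨ X t ω = 1 :=
  Nat.le_one_iff_eq_zero_or_eq_one.1 (hX.le_one t ω)

lemma measure_cylinder_inter [IsFiniteMeasure μ] (hX : IsTwoStateMarkovChain μ X α β) (t : ℕ)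
    (ω₀ : Ω) :
    μ ({ω | ∀ i ≤ t, X i ω = X i ω₀} ∩ {ω | X (t + 1) ω = 1})
      = (if X t ω₀ = 1 then ENNReal.ofReal (1 - β) else ENNReal.ofReal α)
        * μ {ω | ∀ i ≤ t, X i ω = X i ω₀} := by
  have hC : MeasurableSet {ω | ∀ i ≤ t, X i ω = X i ω₀} := by
    rw [← history_preimage_singleton]
    exact measurable_history hX.measurable t (measurableSet_singleton _)
  set C := {ω | ∀ i ≤ t, X i ω = X i ω₀}
  by_cases h0 : μ C = 0
  · rw [h0, mul_zero]
    exact measure_mono_null Set.inter_subset_left h0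
  · rw [← hX.cond_cylinder t (fun i ↦ X i ω₀) h0, cond_apply hC, mul_comm, ← mul_assoc,
      ENNReal.mul_inv_cancel h0 (measure_ne_top μ C), one_mul]

lemma measure_inter_succ_eq_one [IsFiniteMeasure μ] (hX : IsTwoStateMarkovChain μ X α β)
    (hA : IsPastEvent X t A) {b : ℕ} (hb : ∀ ω ∈ A, X t ω = b) :
    μ (A ∩ {ω | X (t + 1) ω = 1})
      = (if b = 1 then ENNReal.ofReal (1 - β) else ENNReal.ofReal α) * μ A := by
  have hfiber : ∀ y ∈ history X t '' A, MeasurableSet (history X t ⁻¹' {y}) :=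
    fun y _ ↦ measurable_history hX.measurable t (measurableSet_singleton y)
  have hcount : (history X t '' A).Countable := Set.to_countable _
  rw [← hA.preimage_image_history, ← Measure.restrict_apply' (hX.measurableSet_eq (t + 1) 1),
    ← tsum_measure_preimage_singleton hcount hfiber,
    ← tsum_measure_preimage_singleton hcount hfiber, ← ENNReal.tsum_mul_left]
  refine tsum_congr ?_
  rintro ⟨_, ω₀, hω₀, rfl⟩
  rw [Measure.restrict_apply (hfiber _ ⟨ω₀, hω₀, rfl⟩), history_preimage_singleton,
    hX.measure_cylinder_inter, hb ω₀ hω₀]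

lemma measureReal_inter_succ_eq_one_of_eq_zero [IsFiniteMeasure μ]
    (hX : IsTwoStateMarkovChain μ X α β) (hα : 0 ≤ α) (hA : IsPastEvent X t A)
    (h0 : ∀ ω ∈ A, X t ω = 0) :
    μ.real (A ∩ {ω | X (t + 1) ω = 1}) = α * μ.real A := by
  simp [measureReal_def, hX.measure_inter_succ_eq_one hA h0, hα]

lemma measureReal_inter_succ_eq_one_of_eq_one [IsFiniteMeasure μ]
    (hX : IsTwoStateMarkovChain μ X α β) (hβ : β ≤ 1) (hA : IsPastEvent X t A)
    (h1 : ∀ ω ∈ A, X t ω = 1) :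
    μ.real (A ∩ {ω | X (t + 1) ω = 1}) = (1 - β) * μ.real A := by
  simp [measureReal_def, hX.measure_inter_succ_eq_one hA h1, hβ]

lemma measureReal_inter_eq_zero [IsFiniteMeasure μ] (hX : IsTwoStateMarkovChain μ X α β)
    (A : Set Ω) (t : ℕ) :
    μ.real (A ∩ {ω | X t ω = 0}) = μ.real A - μ.real (A ∩ {ω | X t ω = 1}) := by
  have hdiff : A \ {ω | X t ω = 1} = A ∩ {ω | X t ω = 0} := by
    ext ω
    rcases hX.eq_zero_or_eq_one t ω with h | h <;> simp [h]
  rw [← measureReal_inter_add_sdiff (hX.measurableSet_eq t 1) (s := A), hdiff]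
  ring

lemma measureReal_inter_succ_eq_one [IsFiniteMeasure μ] (hX : IsTwoStateMarkovChain μ X α β)
    (hα : 0 ≤ α) (hβ : β ≤ 1) (hA : IsPastEvent X t A) :
    μ.real (A ∩ {ω | X (t + 1) ω = 1})
      = (1 - β) * μ.real (A ∩ {ω | X t ω = 1}) + α * μ.real (A ∩ {ω | X t ω = 0}) := by
  have hsplit : A ∩ {ω | X (t + 1) ω = 1}
      = A ∩ {ω | X t ω = 1} ∩ {ω | X (t + 1) ω = 1}
        ∪ A ∩ {ω | X t ω = 0} ∩ {ω | X (t + 1) ω = 1} := by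
    ext ω
    rcases hX.eq_zero_or_eq_one t ω with h | h <;> simp [h]
  have hdisj : Disjoint (A ∩ {ω | X t ω = 1} ∩ {ω | X (t + 1) ω = 1})
      (A ∩ {ω | X t ω = 0} ∩ {ω | X (t + 1) ω = 1}) :=
    Set.disjoint_left.2 fun _ h1 h0 ↦ by simp_all
  have hA₀ : MeasurableSet (A ∩ {ω | X t ω = 0} ∩ {ω | X (t + 1) ω = 1}) :=
    ((hA.measurableSet hX.measurable).inter (hX.measurableSet_eq t 0)).inter
      (hX.measurableSet_eq (t + 1) 1)
  rw [hsplit, measureReal_union hdisj hA₀,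
    hX.measureReal_inter_succ_eq_one_of_eq_one hβ (hA.inter (isPastEvent_setOf_eq le_rfl 1))
      fun _ h ↦ h.2,
    hX.measureReal_inter_succ_eq_one_of_eq_zero hα (hA.inter (isPastEvent_setOf_eq le_rfl 0))
      fun _ h ↦ h.2]

lemma measureReal_inter_add_eq_one [IsFiniteMeasure μ] (hX : IsTwoStateMarkovChain μ X α β)
    (hα : 0 ≤ α) (hβ : β ≤ 1) (hαβ : α + β ≠ 0) {s : ℕ} (hA : IsPastEvent X s A) (k : ℕ) :
    μ.real (A ∩ {ω | X (s + k) ω = 1})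
      = α / (α + β) * μ.real A
        + (1 - α - β) ^ k * (μ.real (A ∩ {ω | X s ω = 1}) - α / (α + β) * μ.real A) := by
  induction k with
  | zero => simp
  | succ k ih =>
    rw [← add_assoc, hX.measureReal_inter_succ_eq_one hα hβ (hA.mono (Nat.le_add_right s k)),
      hX.measureReal_inter_eq_zero, ih]
    field_simp
    ring

lemma measureReal_eq_one [IsProbabilityMeasure μ] (hX : IsTwoStateMarkovChain μ X α β)
    (hα : 0 ≤ α) (hβ : β ≤ 1) (hαβ : α + β ≠ 0)
    (hinit : μ.real {ω | X 0 ω = 1} = α / (α + β)) (t : ℕ) :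
    μ.real {ω | X t ω = 1} = α / (α + β) := by
  simpa [hinit] using hX.measureReal_inter_add_eq_one hα hβ hαβ (A := Set.univ) (s := 0)
    (fun _ _ _ h ↦ h) t

lemma measureReal_upcrossing [IsProbabilityMeasure μ] (hX : IsTwoStateMarkovChain μ X α β)
    (hα : 0 ≤ α) (hβ : β ≤ 1) (hαβ : α + β ≠ 0)
    (hinit : μ.real {ω | X 0 ω = 1} = α / (α + β)) (s : ℕ) :
    μ.real (upcrossing X s) = α * β / (α + β) := by
  have h0 : μ.real {ω | X s ω = 0} = β / (α + β) := by
    simpa [hX.measureReal_eq_one hα hβ hαβ hinit, field] using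
      hX.measureReal_inter_eq_zero Set.univ s
  rw [upcrossing, Set.ofPred_and,
    hX.measureReal_inter_succ_eq_one_of_eq_zero hα (isPastEvent_setOf_eq le_rfl 0) fun _ h ↦ h,
    h0, mul_div_assoc]

lemma measureReal_upcrossing_inter_upcrossing [IsProbabilityMeasure μ]
    (hX : IsTwoStateMarkovChain μ X α β) (hα : 0 ≤ α) (hβ : β ≤ 1) (hαβ : α + β ≠ 0)
    (hinit : μ.real {ω | X 0 ω = 1} = α / (α + β)) (t k : ℕ) :
    μ.real (upcrossing X t ∩ upcrossing X (t + (k + 2)))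
      = α ^ 2 * β ^ 2 / (α + β) ^ 2 * (1 - (1 - α - β) ^ (k + 1)) := by
  set r := t + (k + 2)
  have hsplit : upcrossing X t ∩ upcrossing X r
      = upcrossing X t ∩ {ω | X r ω = 0} ∩ {ω | X (r + 1) ω = 1} := by
    ext ω
    simp only [upcrossing, Set.mem_inter_iff, Set.mem_ofPred_eq, and_assoc]
  have hpast : IsPastEvent X r (upcrossing X t ∩ {ω | X r ω = 0}) :=
    ((isPastEvent_upcrossing t).mono (by omega)).inter (isPastEvent_setOf_eq le_rfl 0)
  have hup : upcrossing X t ∩ {ω | X (t + 1) ω = 1} = upcrossing X t :=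
    Set.inter_eq_left.2 fun _ h ↦ h.2
  have hreturn := hX.measureReal_inter_add_eq_one hα hβ hαβ (isPastEvent_upcrossing t) (k + 1)
  rw [hup, show t + 1 + (k + 1) = r by omega] at hreturn
  rw [hsplit, hX.measureReal_inter_succ_eq_one_of_eq_zero hα hpast fun _ h ↦ h.2,
    hX.measureReal_inter_eq_zero, hreturn, hX.measureReal_upcrossing hα hβ hαβ hinit]
  field_simp
  ring

end IsTwoStateMarkovChain

end Chain

end TwoStateChain

theorem stmt13 (α β : ℝ) (hα : 0 < α) (hβ : 0 < β) (hαβ : α + β ≤ 1)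
    {Ω : Type*} [MeasurableSpace Ω] (μ : Measure Ω) [IsProbabilityMeasure μ]
    (X : ℕ → Ω → ℕ)
    (hmeas : ∀ t, Measurable (X t))
    (hval : ∀ t ω, X t ω ≤ 1)
    (hmarkov : ∀ (t : ℕ) (x : ℕ → ℕ),
      μ {ω | ∀ i ≤ t, X i ω = x i} ≠ 0 →
      ProbabilityTheory.cond μ {ω | ∀ i ≤ t, X i ω = x i} {ω | X (t + 1) ω = 1}
        = if x t = 1 then ENNReal.ofReal (1 - β) else ENNReal.ofReal α)
    (hinit : μ {ω | X 0 ω = 1} = ENNReal.ofReal (α / (α + β)))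
    (Y : ℕ → Ω → ℝ)
    (hY : ∀ s ω, Y s ω = (X (s + 1) ω : ℝ) * (1 - (X s ω : ℝ))) :
    ∀ t,
      (∫ ω, Y t ω * Y (t + 1) ω ∂μ) = 0 ∧
      (∀ k, (∫ ω, Y t ω * Y (t + (k + 2)) ω ∂μ)
        = α ^ 2 * β ^ 2 / (α + β) ^ 2 * (1 - (1 - α - β) ^ (k + 1))) ∧
      (∀ k, (∫ ω, Y t ω * Y (t + (k + 1)) ω ∂μ)
          - (∫ ω, Y t ω ∂μ) * (∫ ω, Y (t + (k + 1)) ω ∂μ)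
        = -(α ^ 2 * β ^ 2 / (α + β) ^ 2) * (1 - α - β) ^ k) := by
  have hX : IsTwoStateMarkovChain μ X α β := ⟨hmeas, hval, hmarkov⟩
  have hα₀ : 0 ≤ α := hα.le
  have hβ₁ : β ≤ 1 := by linarith
  have hαβ₀ : α + β ≠ 0 := by positivity
  have hinit' : μ.real {ω | X 0 ω = 1} = α / (α + β) := by
    rw [measureReal_def, hinit, ENNReal.toReal_ofReal (by positivity)]
  have hY_eq : ∀ s, Y s = (upcrossing X s).indicator 1 :=
    fun s ↦ funext fun ω ↦ by rw [hY, indicator_upcrossing_apply hval]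
  have hmeasUp : ∀ s, MeasurableSet (upcrossing X s) :=
    fun s ↦ (isPastEvent_upcrossing s).measurableSet hmeas
  have hmean : ∀ s, ∫ ω, Y s ω ∂μ = α * β / (α + β) := fun s ↦ by
    rw [hY_eq, integral_indicator_one (hmeasUp s), hX.measureReal_upcrossing hα₀ hβ₁ hαβ₀ hinit']
  have hcorr : ∀ s r, ∫ ω, Y s ω * Y r ω ∂μ = μ.real (upcrossing X s ∩ upcrossing X r) :=
    fun s r ↦ by
      rw [hY_eq, hY_eq, ← integral_indicator_one ((hmeasUp s).inter (hmeasUp r)),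
        Set.inter_indicator_one]
      rfl
  intro t
  have hadjacent : ∫ ω, Y t ω * Y (t + 1) ω ∂μ = 0 := by
    rw [hcorr, upcrossing_inter_upcrossing_succ, measureReal_empty]
  have hapart : ∀ k, ∫ ω, Y t ω * Y (t + (k + 2)) ω ∂μ
      = α ^ 2 * β ^ 2 / (α + β) ^ 2 * (1 - (1 - α - β) ^ (k + 1)) := fun k ↦ by
    rw [hcorr, hX.measureReal_upcrossing_inter_upcrossing hα₀ hβ₁ hαβ₀ hinit']
  refine ⟨hadjacent, hapart, ?_⟩
  rintro (_ | k)
  · rw [hadjacent, hmean, hmean]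
    field_simp
    ring
  · rw [hapart k, hmean, hmean]
    field_simp
    ring
end

section
/- In the setting of the previous statement, write the rank-q eigendecomposition L = Γ_q Λ Γ_q^T where Λ is the q×q diagonal matrix of nonzero eigenvalues of L and Γ_q has orthonormal columns. Then there exists an invertible matrix U ∈ R^{q×q} such that Γ_q = Z U; consequently, for any rows i, j, the i-th and j-th rows of Γ_q are equal if and only if the i-th and j-th rows of Z are equal. -/
open MeasureTheory ProbabilityTheory Filter Matrix

theorem stmt16 (p q : ℕ) (hq : 0 < q) (Z : Matrix (Fin p) (Fin q) ℝ)
    (hZ01 : ∀ i j, Z i j = 0 ∨ Z i j = 1)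
    (hrow : ∀ i, ∃! j, Z i j = 1)
    (s : Fin q → ℝ) (hs : ∀ k, s k = ∑ i, Z i k) (hspos : ∀ k, 0 < s k)
    (M : Matrix (Fin q) (Fin q) ℝ) (hM : M.IsSymm) (hMdet : M.det ≠ 0)
    (N : Matrix (Fin q) (Fin q) ℝ)
    (hN : N = Matrix.diagonal (fun k => Real.sqrt (s k)))
    (L : Matrix (Fin p) (Fin p) ℝ)
    (hL : L = (Z * N⁻¹) * M * (Z * N⁻¹)ᵀ)
    (Γ : Matrix (Fin p) (Fin q) ℝ) (Λ : Matrix (Fin q) (Fin q) ℝ)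
    (hΛ : ∃ d : Fin q → ℝ, (∀ k, d k ≠ 0) ∧ Λ = Matrix.diagonal d)
    (hΓorth : Γᵀ * Γ = 1)
    (hdecomp : L = Γ * Λ * Γᵀ) :
    ∃ U : Matrix (Fin q) (Fin q) ℝ, IsUnit U.det ∧ Γ = Z * U ∧
      ∀ i j : Fin p, (∀ k, Γ i k = Γ j k) ↔ (∀ k, Z i k = Z j k) := by
  obtain ⟨d, hd, hΛd⟩ := hΛ
  have hΛdet : IsUnit Λ.det := by
    rw [hΛd, Matrix.det_diagonal, isUnit_iff_ne_zero]
    exact Finset.prod_ne_zero_iff.mpr fun k _ => hd k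
  have h1 : L * Γ = Γ * Λ := by
    rw [hdecomp, Matrix.mul_assoc, Matrix.mul_assoc, hΓorth, Matrix.mul_one]
  set U : Matrix (Fin q) (Fin q) ℝ := N⁻¹ * M * N⁻¹ᵀ * Zᵀ * Γ * Λ⁻¹ with hU
  have hΓZU : Γ = Z * U := by
    have h2 : Γ = L * Γ * Λ⁻¹ := by
      rw [h1, Matrix.mul_assoc, Matrix.mul_nonsing_inv _ hΛdet, Matrix.mul_one]
    rw [h2, hL]
    simp only [hU, Matrix.transpose_mul, Matrix.mul_assoc]
  have hZZ : Zᵀ * Z = Matrix.diagonal s := by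
    ext k l
    rw [Matrix.mul_apply]
    by_cases hkl : k = l
    · subst hkl
      rw [Matrix.diagonal_apply_eq, hs]
      apply Finset.sum_congr rfl
      intro i _
      rcases hZ01 i k with h | h <;> simp [Matrix.transpose_apply, h]
    · rw [Matrix.diagonal_apply_ne _ hkl]
      apply Finset.sum_eq_zero
      intro i _
      rcases hZ01 i k with h | h
      · simp [Matrix.transpose_apply, h]
      · rcases hZ01 i l with h' | h'
        · simp [h']
        · exact absurd (by
            obtain ⟨j0, _, huniq⟩ := hrow i
            exact (huniq k h).trans (huniq l h').symm) hkl
  have hkey : (1 : Matrix (Fin q) (Fin q) ℝ) = Uᵀ * Matrix.diagonal s * U := by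
    rw [← hZZ, ← hΓorth, hΓZU]
    simp only [Matrix.transpose_mul, Matrix.mul_assoc]
  have hUdet : IsUnit U.det := by
    rw [isUnit_iff_ne_zero]
    intro h0
    have := congrArg Matrix.det hkey
    rw [Matrix.det_one, Matrix.det_mul, Matrix.det_mul, h0, mul_zero] at this
    exact one_ne_zero this
  refine ⟨U, hUdet, hΓZU, fun i j => ?_⟩
  constructor
  · intro h k
    have hv : (fun l => Z i l - Z j l) ᵥ* U = 0 := by
      funext m
      have hi : Γ i m = ∑ l, Z i l * U l m := by rw [hΓZU, Matrix.mul_apply]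
      have hj : Γ j m = ∑ l, Z j l * U l m := by rw [hΓZU, Matrix.mul_apply]
      have : ∑ l, (Z i l - Z j l) * U l m = 0 := by
        simp only [sub_mul, Finset.sum_sub_distrib]
        rw [← hi, ← hj, h m, sub_self]
      simpa [Matrix.vecMul, dotProduct] using this
    have hv0 : (fun l => Z i l - Z j l) = 0 := by
      have := congrArg (fun w => w ᵥ* U⁻¹) hv
      simpa [Matrix.vecMul_vecMul, Matrix.mul_nonsing_inv U hUdet,
        Matrix.vecMul_one, Matrix.zero_vecMul] using this
    have := congrFun hv0 k
    simpa [sub_eq_zero] using this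
  · intro h k
    rw [hΓZU, Matrix.mul_apply, Matrix.mul_apply]
    exact Finset.sum_congr rfl fun l _ => by rw [h l]
end

section
/- Let {X_t} be the stationary two-state Markov chain with transition probabilities α (0→1) and β (1→0), α, β > 0, α+β ≤ 1. Then for any τ ≥ 1 and any events A in the σ-algebra generated by (X_0, ..., X_k) and B in the σ-algebra generated by (X_{k+τ}, X_{k+τ+1}, ...), |P(A ∩ B) − P(A)P(B)| ≤ (1 − α − β)^τ. Hence the α-mixing coefficient of the chain at lag τ is at most (1−α−β)^τ. -/
/-!
Condition on the state at time `s = k + τ`. Given `X s`, the past event `A` and the future event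
`B` are independent (on path cylinders the transition probabilities multiply; a π-λ argument does
the rest), so
`P(A ∩ B) - P(A) P(B) = (P(A ∩ {X s = 1}) - P(A) P(X s = 1)) (P(B | X s = 1) - P(B | X s = 0))`,
where the second factor has absolute value at most `1`. Since `P(X (t + 1) = 1 | past)` is `1 - β`
or `α` according to `X t`, the deviation `P(A ∩ {X t = 1}) - π P(A)`, `π = α / (α + β)`, gets
multiplied by `1 - α - β` at each step after time `k`; for `A = Ω` this also shows that
`P(X t = 1) = π` for all `t`.
-/

open MeasureTheory ProbabilityTheory Set
open scoped ENNReal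

theorem abs_measureReal_inter_sub_mul_le_of_condIndep {Ω : Type*} [MeasurableSpace Ω]
    {μ : Measure Ω} [IsProbabilityMeasure μ] {A B S : Set Ω} (hA : MeasurableSet A)
    (hB : MeasurableSet B) (hS : MeasurableSet S) (hS₀ : 0 < μ.real S) (hS₁ : μ.real S < 1)
    (hSB : μ.real (A ∩ S ∩ B) * μ.real S = μ.real (A ∩ S) * μ.real (S ∩ B))
    (hScB : μ.real (A ∩ Sᶜ ∩ B) * μ.real Sᶜ = μ.real (A ∩ Sᶜ) * μ.real (Sᶜ ∩ B)) :
    |μ.real (A ∩ B) - μ.real A * μ.real B| ≤ |μ.real (A ∩ S) - μ.real A * μ.real S| := by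
  have split {F : Set Ω} (hF : MeasurableSet F) :
      μ.real (F ∩ S) + μ.real (F ∩ Sᶜ) = μ.real F := by
    rw [← sdiff_eq, measureReal_inter_add_sdiff hS]
  have hA' := split hA
  have hB' := split hB
  have hAB' := split (hA.inter hB)
  rw [inter_right_comm, inter_right_comm A B] at hAB'
  rw [inter_comm B, inter_comm B] at hB'
  rw [probReal_compl_eq_one_sub hS] at hScB
  set p := μ.real S
  set r := μ.real (S ∩ B) / p
  set r' := μ.real (Sᶜ ∩ B) / (1 - p)
  have hp : 1 - p ≠ 0 := by linarith
  have hr : 0 ≤ r ∧ r ≤ 1 :=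
    ⟨by positivity, div_le_one_of_le₀ (measureReal_mono inter_subset_left) hS₀.le⟩
  have hr' : 0 ≤ r' ∧ r' ≤ 1 := by
    refine ⟨div_nonneg measureReal_nonneg (by linarith), div_le_one_of_le₀ ?_ (by linarith)⟩
    rw [← probReal_compl_eq_one_sub hS]
    exact measureReal_mono inter_subset_left
  have hx : μ.real (A ∩ S ∩ B) = μ.real (A ∩ S) * r := by
    rw [mul_div_assoc', eq_div_iff hS₀.ne', hSB]
  have hx' : μ.real (A ∩ Sᶜ ∩ B) = μ.real (A ∩ Sᶜ) * r' := by
    rw [mul_div_assoc', eq_div_iff hp, hScB]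
  have hy : μ.real (S ∩ B) = p * r := by rw [mul_div_cancel₀ _ hS₀.ne']
  have hy' : μ.real (Sᶜ ∩ B) = (1 - p) * r' := by rw [mul_div_cancel₀ _ hp]
  have hcov : μ.real (A ∩ B) - μ.real A * μ.real B =
      (μ.real (A ∩ S) - μ.real A * p) * (r - r') := by
    rw [← hAB', ← hA', ← hB', hx, hx', hy, hy']
    ring
  rw [hcov, abs_mul]
  exact mul_le_of_le_one_right (abs_nonneg _) (abs_sub_le_iff.2 ⟨by linarith, by linarith⟩)

namespace BinaryMarkovChain

variable {Ω : Type*} {X : ℕ → Ω → ℕ}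

def pathCylinder (X : ℕ → Ω → ℕ) (s m : ℕ) (y : Fin (m + 1) → ℕ) : Set Ω :=
  {ω | ∀ i : Fin (m + 1), X (s + i) ω = y i}

def DeterminedUpTo (X : ℕ → Ω → ℕ) (s : ℕ) (E : Set Ω) : Prop :=
  ∀ ω ω', (∀ i ≤ s, X i ω = X i ω') → (ω ∈ E ↔ ω' ∈ E)

abbrev past (X : ℕ → Ω → ℕ) (k : ℕ) : MeasurableSpace Ω :=
  ⨆ i : Fin (k + 1), MeasurableSpace.comap (X i.1) inferInstance

abbrev future (X : ℕ → Ω → ℕ) (s : ℕ) : MeasurableSpace Ω :=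
  ⨆ i : {i : ℕ // s ≤ i}, MeasurableSpace.comap (X i.1) inferInstance

lemma measurableSet_pathCylinder [MeasurableSpace Ω] (hX : ∀ t, Measurable (X t)) (s m : ℕ)
    (y : Fin (m + 1) → ℕ) :
    MeasurableSet (pathCylinder X s m y) := by
  simp only [pathCylinder, ofPred_forall]
  exact .iInter fun i => hX _ (measurableSet_singleton _)

lemma pathCylinder_zero (s : ℕ) (y : Fin 1 → ℕ) : pathCylinder X s 0 y = {ω | X s ω = y 0} := by
  simp [pathCylinder, Fin.forall_fin_one]

lemma pathCylinder_succ (s m : ℕ) (y : Fin (m + 2) → ℕ) :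
    pathCylinder X s (m + 1) y =
      pathCylinder X s m (Fin.init y) ∩ {ω | X (s + m + 1) ω = y (Fin.last (m + 1))} := by
  ext ω
  simp [pathCylinder, Fin.forall_fin_succ', Fin.init, add_assoc]

lemma measure_eq_tsum_inter_pathCylinder [MeasurableSpace Ω] (μ : Measure Ω)
    (hX : ∀ t, Measurable (X t)) {F : Set Ω} (hF : MeasurableSet F) (s m : ℕ) :
    μ F = ∑' y, μ (F ∩ pathCylinder X s m y) := by
  have hcover : F = ⋃ y, F ∩ pathCylinder X s m y := by
    rw [← inter_iUnion, eq_comm, inter_eq_left]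
    exact fun ω _ => mem_iUnion.2 ⟨fun i => X (s + i) ω, fun _ => rfl⟩
  conv_lhs => rw [hcover]
  refine measure_iUnion (fun y y' hyy' => ?_) fun y =>
    hF.inter (measurableSet_pathCylinder hX s m y)
  refine disjoint_left.2 fun ω hy hy' => hyy' (funext fun i => ?_)
  rw [← hy.2 i, hy'.2 i]

lemma isPiSystem_pathCylinders (s : ℕ) :
    IsPiSystem {C | ∃ m y, pathCylinder X s m y = C} := by
  have key : ∀ m m' y y', m ≤ m' → (pathCylinder X s m y ∩ pathCylinder X s m' y').Nonempty →
      pathCylinder X s m y ∩ pathCylinder X s m' y' = pathCylinder X s m' y' := by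
    rintro m m' y y' hm ⟨ω, hω, hω'⟩
    refine inter_eq_right.2 fun ω₁ h₁ i => ?_
    have hi : (i : ℕ) < m' + 1 := by omega
    rw [h₁ ⟨i, hi⟩, ← hω' ⟨i, hi⟩, hω i]
  rintro _ ⟨m, y, rfl⟩ _ ⟨m', y', rfl⟩ hne
  rcases le_total m m' with h | h
  · exact ⟨m', y', (key m m' y y' h hne).symm⟩
  · rw [inter_comm] at hne ⊢
    exact ⟨m, y, (key m' m y' y h hne).symm⟩

lemma future_eq_generateFrom_pathCylinders (s : ℕ) :
    future X s = MeasurableSpace.generateFrom {C | ∃ m y, pathCylinder X s m y = C} := by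
  refine le_antisymm (iSup_le fun ⟨i, hi⟩ => ?_) (MeasurableSpace.generateFrom_le ?_)
  · obtain ⟨d, rfl⟩ := Nat.exists_eq_add_of_le hi
    rintro _ ⟨S, -, rfl⟩
    have : X (s + d) ⁻¹' S =
        ⋃ y : Fin (d + 1) → ℕ, ⋃ (_ : y (Fin.last d) ∈ S), pathCylinder X s d y := by
      ext ω
      simp only [mem_preimage, mem_iUnion, pathCylinder, mem_ofPred_eq, exists_prop]
      exact ⟨fun h => ⟨fun i => X (s + i) ω, h, fun _ => rfl⟩,
        fun ⟨y, hy, hω⟩ => by rwa [← Fin.val_last d, hω]⟩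
    rw [this]
    exact .iUnion fun y => .iUnion fun _ => MeasurableSpace.measurableSet_generateFrom ⟨d, y, rfl⟩
  · rintro _ ⟨m, y, rfl⟩
    simp only [pathCylinder, ofPred_forall]
    refine .iInter fun i => ?_
    exact le_iSup (fun j : {j // s ≤ j} => MeasurableSpace.comap (X j.1) inferInstance)
      ⟨s + i, Nat.le_add_right _ _⟩ _ ⟨{y i}, trivial, rfl⟩

lemma future_le [MeasurableSpace Ω] (hX : ∀ t, Measurable (X t)) (s : ℕ) :
    future X s ≤ ‹MeasurableSpace Ω› :=
  iSup_le fun i => (hX i).comap_le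

lemma past_le [MeasurableSpace Ω] (hX : ∀ t, Measurable (X t)) (k : ℕ) :
    past X k ≤ ‹MeasurableSpace Ω› :=
  iSup_le fun i => (hX i).comap_le

lemma determinedUpTo_setOf_eq {s j : ℕ} (hj : j ≤ s) (c : ℕ) :
    DeterminedUpTo X s {ω | X j ω = c} :=
  fun ω ω' h => by simp only [mem_ofPred_eq, h j hj]

lemma determinedUpTo_pathCylinder (s m : ℕ) (y : Fin (m + 1) → ℕ) :
    DeterminedUpTo X (s + m) (pathCylinder X s m y) :=
  fun ω ω' h => forall_congr' fun i => by rw [h (s + i) (by omega)]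

namespace DeterminedUpTo

lemma mono {k s : ℕ} (hks : k ≤ s) {E : Set Ω} (hE : DeterminedUpTo X k E) :
    DeterminedUpTo X s E :=
  fun ω ω' h => hE ω ω' fun i hi => h i (hi.trans hks)

lemma inter {s : ℕ} {E F : Set Ω} (hE : DeterminedUpTo X s E) (hF : DeterminedUpTo X s F) :
    DeterminedUpTo X s (E ∩ F) :=
  fun ω ω' h => and_congr (hE ω ω' h) (hF ω ω' h)

lemma pathCylinder_subset {s : ℕ} {E : Set Ω} (hE : DeterminedUpTo X s E)
    {y : Fin (s + 1) → ℕ} {ω : Ω} (hω : ω ∈ E ∩ pathCylinder X 0 s y) :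
    pathCylinder X 0 s y ⊆ E := fun ω' hω' =>
  (hE ω ω' fun i hi => by simpa using (hω.2 ⟨i, by omega⟩).trans (hω' ⟨i, by omega⟩).symm).1 hω.1

lemma of_measurableSet_past {k : ℕ} {A : Set Ω} (hA : MeasurableSet[past X k] A) :
    DeterminedUpTo X k A := by
  have hle : past X k ≤ MeasurableSpace.comap (fun ω (i : Fin (k + 1)) => X i ω) ⊤ :=
    iSup_le fun i => MeasurableSpace.comap_le_comap_of_eq_comp (fun v => v i)
      measurable_from_top rfl
  obtain ⟨U, -, rfl⟩ := hle A hA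
  exact fun ω ω' h => Iff.of_eq (congrArg (· ∈ U) (funext fun i => h i (by omega)))

end DeterminedUpTo

def probToOne (α β : ℝ) (a : ℕ) : ℝ≥0∞ :=
  if a = 1 then ENNReal.ofReal (1 - β) else ENNReal.ofReal α

def transProb (α β : ℝ) (a c : ℕ) : ℝ≥0∞ :=
  if c = 1 then probToOne α β a else if c = 0 then 1 - probToOne α β a else 0

end BinaryMarkovChain

open BinaryMarkovChain

structure IsBinaryMarkovChain {Ω : Type*} [MeasurableSpace Ω] (μ : Measure Ω) (X : ℕ → Ω → ℕ)
    (α β : ℝ) : Prop where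
  measurable : ∀ t, Measurable (X t)
  le_one : ∀ t ω, X t ω ≤ 1
  cond_eq_probToOne : ∀ (t : ℕ) (x : ℕ → ℕ), μ {ω | ∀ i ≤ t, X i ω = x i} ≠ 0 →
    cond μ {ω | ∀ i ≤ t, X i ω = x i} {ω | X (t + 1) ω = 1} = probToOne α β (x t)

namespace IsBinaryMarkovChain

variable {Ω : Type*} [MeasurableSpace Ω] {μ : Measure Ω} {X : ℕ → Ω → ℕ} {α β : ℝ}

lemma measurableSet_setOf_eq (hX : IsBinaryMarkovChain μ X α β) (t c : ℕ) :
    MeasurableSet {ω | X t ω = c} :=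
  hX.measurable t (measurableSet_singleton c)

lemma setOf_eq_zero (hX : IsBinaryMarkovChain μ X α β) (t : ℕ) :
    {ω | X t ω = 0} = {ω | X t ω = 1}ᶜ := by
  ext ω
  have := hX.le_one t ω
  simp only [mem_ofPred_eq, mem_compl_iff]
  omega

section Finite

variable [IsFiniteMeasure μ]

lemma measure_pathCylinder_inter_eq_one (hX : IsBinaryMarkovChain μ X α β) (t : ℕ)
    (y : Fin (t + 1) → ℕ) :
    μ (pathCylinder X 0 t y ∩ {ω | X (t + 1) ω = 1}) =
      probToOne α β (y (Fin.last t)) * μ (pathCylinder X 0 t y) := by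
  let x : ℕ → ℕ := fun i => if h : i < t + 1 then y ⟨i, h⟩ else 0
  have hcyl : pathCylinder X 0 t y = {ω | ∀ i ≤ t, X i ω = x i} := by
    ext ω
    simp only [pathCylinder, mem_ofPred_eq, Fin.forall_iff, zero_add]
    exact forall_congr' fun i =>
      ⟨fun h hi => by simp [x, hi, h (by omega)],
        fun h hi => by simpa [x, Nat.lt_succ_iff.1 hi] using h (by omega)⟩
  rw [hcyl]
  by_cases h0 : μ {ω | ∀ i ≤ t, X i ω = x i} = 0
  · simp [h0, measure_inter_null_of_null_left]
  · rw [← cond_mul_eq_inter (hcyl ▸ measurableSet_pathCylinder hX.measurable 0 t y),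
      hX.cond_eq_probToOne t x h0]
    simp [x, Fin.last]

-- Split `E` along the cylinders of the path up to time `t`: each one lies in `E` or misses it,
-- and on each one the Markov hypothesis applies.
lemma measure_inter_eq_one_of_subset (hX : IsBinaryMarkovChain μ X α β) {t a : ℕ} {E : Set Ω}
    (hE : MeasurableSet E) (hEd : DeterminedUpTo X t E) (hEa : E ⊆ {ω | X t ω = a}) :
    μ (E ∩ {ω | X (t + 1) ω = 1}) = probToOne α β a * μ E := by
  rw [measure_eq_tsum_inter_pathCylinder μ hX.measurable
      (hE.inter (hX.measurableSet_setOf_eq _ _)) 0 t,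
    measure_eq_tsum_inter_pathCylinder μ hX.measurable hE 0 t, ← ENNReal.tsum_mul_left]
  refine tsum_congr fun y => ?_
  rw [inter_right_comm]
  rcases (E ∩ pathCylinder X 0 t y).eq_empty_or_nonempty with h | ⟨ω, hω⟩
  · simp [h]
  · have hya : y (Fin.last t) = a := by
      rw [← hω.2 (Fin.last t)]
      simpa using hEa hω.1
    rw [inter_eq_right.2 (hEd.pathCylinder_subset hω), hX.measure_pathCylinder_inter_eq_one, hya]

lemma measure_inter_eq_transProb_of_subset (hX : IsBinaryMarkovChain μ X α β) {t a : ℕ}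
    {E : Set Ω} (hE : MeasurableSet E) (hEd : DeterminedUpTo X t E) (hEa : E ⊆ {ω | X t ω = a})
    (c : ℕ) :
    μ (E ∩ {ω | X (t + 1) ω = c}) = transProb α β a c * μ E := by
  have h1 := hX.measure_inter_eq_one_of_subset hE hEd hEa
  rcases (by omega : c = 1 ∨ c = 0 ∨ 2 ≤ c) with rfl | rfl | hc
  · simpa [transProb] using h1
  · have hsplit := measure_sdiff_add_inter (μ := μ) E (hX.measurableSet_setOf_eq (t + 1) 1)
    rw [hX.setOf_eq_zero, ← sdiff_eq, ENNReal.eq_sub_of_add_eq (measure_ne_top _ _) hsplit, h1,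
      transProb, if_neg zero_ne_one, if_pos rfl, ENNReal.sub_mul fun _ _ => measure_ne_top _ _,
      one_mul]
  · have : {ω | X (t + 1) ω = c} = ∅ :=
      eq_empty_of_forall_notMem fun ω hω => by have := hX.le_one (t + 1) ω; simp_all; omega
    simp [this, transProb, show c ≠ 0 by omega, show c ≠ 1 by omega]

lemma measure_inter_pathCylinder (hX : IsBinaryMarkovChain μ X α β) {s : ℕ} {E : Set Ω}
    (hE : MeasurableSet E) (hEd : DeterminedUpTo X s E) :
    ∀ (m : ℕ) (y : Fin (m + 1) → ℕ), E ⊆ {ω | X s ω = y 0} →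
      μ (E ∩ pathCylinder X s m y) = μ E * ∏ i : Fin m, transProb α β (y i.castSucc) (y i.succ)
  | 0, y, hEy => by simp [pathCylinder_zero, inter_eq_left.2 hEy]
  | m + 1, y, hEy => by
    have hstep := hX.measure_inter_eq_transProb_of_subset
      (hE.inter (measurableSet_pathCylinder hX.measurable s m (Fin.init y)))
      ((hEd.mono (Nat.le_add_right s m)).inter (determinedUpTo_pathCylinder s m _))
      (a := y (Fin.last m).castSucc) (fun ω hω => by simpa [Fin.init] using hω.2 (Fin.last m))
      (y (Fin.last (m + 1)))
    rw [pathCylinder_succ, ← inter_assoc, hstep,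
      measure_inter_pathCylinder hX hE hEd m _ (by simpa [Fin.init] using hEy),
      Fin.prod_univ_castSucc]
    simp only [Fin.init, Fin.succ_castSucc, Fin.succ_last]
    ring

-- Markov property: both sides are finite measures in `B` that agree on the path cylinders, which
-- generate `future X s`.
lemma measure_inter_inter_mul_eq (hX : IsBinaryMarkovChain μ X α β) {s b : ℕ} {E B : Set Ω}
    (hE : MeasurableSet E) (hEd : DeterminedUpTo X s E) (hB : MeasurableSet[future X s] B) :
    μ (E ∩ {ω | X s ω = b} ∩ B) * μ {ω | X s ω = b} =
      μ (E ∩ {ω | X s ω = b}) * μ ({ω | X s ω = b} ∩ B) := by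
  set S := {ω | X s ω = b}
  have hS : MeasurableSet S := hX.measurableSet_setOf_eq s b
  have hSd : DeterminedUpTo X s S := determinedUpTo_setOf_eq le_rfl b
  have := Measure.smul_finite (μ.restrict (E ∩ S)) (measure_ne_top μ S)
  have key := ext_on_measurableSpace_of_generate_finite _ _ ?_ (future_le hX.measurable s)
    (future_eq_generateFrom_pathCylinders s) (isPiSystem_pathCylinders s) ?_ hB
    (μ := μ S • μ.restrict (E ∩ S)) (ν := μ (E ∩ S) • μ.restrict S)
  · simpa [Measure.restrict_apply (future_le hX.measurable s B hB), mul_comm, inter_comm] using key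
  · rintro _ ⟨m, y, rfl⟩
    simp only [Measure.smul_apply, smul_eq_mul,
      Measure.restrict_apply (measurableSet_pathCylinder hX.measurable s m y)]
    by_cases hy : y 0 = b
    · rw [inter_comm _ (E ∩ S), hX.measure_inter_pathCylinder (hE.inter hS) (hEd.inter hSd) m y
        fun ω hω => hω.2.trans hy.symm, inter_comm (pathCylinder X s m y) S,
        hX.measure_inter_pathCylinder hS hSd m y fun ω hω => hω.trans hy.symm]
      ring
    · have hdisj : pathCylinder X s m y ∩ S = ∅ :=
        eq_empty_of_forall_notMem fun ω ⟨hωy, hωS⟩ => hy (by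
          have := hωy 0
          simp_all [S])
      simp [← inter_assoc, hdisj, inter_right_comm _ E S]
  · simp [mul_comm]

lemma measureReal_inter_succ_eq_one (hX : IsBinaryMarkovChain μ X α β) (hα : 0 ≤ α) (hβ : β ≤ 1)
    {t : ℕ} {E : Set Ω} (hE : MeasurableSet E) (hEd : DeterminedUpTo X t E) :
    μ.real (E ∩ {ω | X (t + 1) ω = 1}) =
      (1 - β) * μ.real (E ∩ {ω | X t ω = 1}) + α * μ.real (E ∩ {ω | X t ω = 1}ᶜ) := by
  have step (a : ℕ) : μ.real (E ∩ {ω | X t ω = a} ∩ {ω | X (t + 1) ω = 1}) =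
      (probToOne α β a).toReal * μ.real (E ∩ {ω | X t ω = a}) := by
    simp only [measureReal_def, ← ENNReal.toReal_mul]
    rw [hX.measure_inter_eq_one_of_subset (hE.inter (hX.measurableSet_setOf_eq t a))
      (hEd.inter (determinedUpTo_setOf_eq le_rfl a)) inter_subset_right]
  have h1 := step 1
  have h0 := step 0
  rw [hX.setOf_eq_zero] at h0
  simp only [probToOne, if_pos, if_neg zero_ne_one, ENNReal.toReal_ofReal hα,
    ENNReal.toReal_ofReal (sub_nonneg.2 hβ)] at h1 h0
  rw [← h1, ← h0, ← measureReal_inter_add_sdiff (hX.measurableSet_setOf_eq t 1), sdiff_eq,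
    inter_right_comm, inter_right_comm E _ {ω | X t ω = 1}ᶜ]

lemma measureReal_inter_sub_eq_pow_mul (hX : IsBinaryMarkovChain μ X α β) (hα : 0 ≤ α)
    (hβ : β ≤ 1) (hαβ : 0 < α + β) {k : ℕ} {E : Set Ω} (hE : MeasurableSet E)
    (hEd : DeterminedUpTo X k E) (n : ℕ) :
    μ.real (E ∩ {ω | X (k + n) ω = 1}) - α / (α + β) * μ.real E =
      (1 - α - β) ^ n * (μ.real (E ∩ {ω | X k ω = 1}) - α / (α + β) * μ.real E) := by
  induction n with
  | zero => simp
  | succ n ih =>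
    have hcompl : μ.real (E ∩ {ω | X (k + n) ω = 1}ᶜ) =
        μ.real E - μ.real (E ∩ {ω | X (k + n) ω = 1}) := by
      rw [← sdiff_eq, ← measureReal_inter_add_sdiff (hX.measurableSet_setOf_eq (k + n) 1) (s := E)]
      ring
    rw [← add_assoc, hX.measureReal_inter_succ_eq_one hα hβ hE (hEd.mono (Nat.le_add_right k n)),
      hcompl, pow_succ, mul_comm _ (1 - α - β), mul_assoc, ← ih]
    field_simp
    ring

end Finite

lemma measureReal_setOf_eq_one_of_initial [IsProbabilityMeasure μ]
    (hX : IsBinaryMarkovChain μ X α β) (hα : 0 ≤ α) (hβ : β ≤ 1) (hαβ : 0 < α + β)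
    (h₀ : μ.real {ω | X 0 ω = 1} = α / (α + β)) (t : ℕ) :
    μ.real {ω | X t ω = 1} = α / (α + β) := by
  refine sub_eq_zero.1 ?_
  simpa [h₀] using hX.measureReal_inter_sub_eq_pow_mul hα hβ hαβ (k := 0) MeasurableSet.univ
    (fun _ _ _ => Iff.rfl) t

end IsBinaryMarkovChain

theorem stmt19 (α β : ℝ) (hα : 0 < α) (hβ : 0 < β) (hαβ : α + β ≤ 1)
    {Ω : Type*} [MeasurableSpace Ω] (μ : Measure Ω) [IsProbabilityMeasure μ]
    (X : ℕ → Ω → ℕ)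
    (hmeas : ∀ t, Measurable (X t))
    (hval : ∀ t ω, X t ω ≤ 1)
    (hmarkov : ∀ (t : ℕ) (x : ℕ → ℕ),
      μ {ω | ∀ i ≤ t, X i ω = x i} ≠ 0 →
      ProbabilityTheory.cond μ {ω | ∀ i ≤ t, X i ω = x i} {ω | X (t + 1) ω = 1}
        = if x t = 1 then ENNReal.ofReal (1 - β) else ENNReal.ofReal α)
    (hinit : μ {ω | X 0 ω = 1} = ENNReal.ofReal (α / (α + β))) :
    ∀ τ : ℕ, 1 ≤ τ → ∀ (k : ℕ) (A B : Set Ω),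
      MeasurableSet[⨆ i : Fin (k + 1), MeasurableSpace.comap (X i.1) inferInstance] A →
      MeasurableSet[⨆ i : {i : ℕ // k + τ ≤ i}, MeasurableSpace.comap (X i.1) inferInstance] B →
      |(μ (A ∩ B)).toReal - (μ A).toReal * (μ B).toReal| ≤ (1 - α - β) ^ τ := by
  intro τ _ k A B hA hB
  have hX : IsBinaryMarkovChain μ X α β := ⟨hmeas, hval, hmarkov⟩
  have hπ₀ : 0 < α / (α + β) := by positivity
  have hπ₁ : α / (α + β) < 1 := by rw [div_lt_one (by positivity)]; linarith
  have hAm : MeasurableSet A := past_le hmeas k A hA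
  have hBm : MeasurableSet B := future_le hmeas (k + τ) B hB
  have hAd : DeterminedUpTo X (k + τ) A :=
    (DeterminedUpTo.of_measurableSet_past hA).mono (Nat.le_add_right k τ)
  have hS : μ.real {ω | X (k + τ) ω = 1} = α / (α + β) :=
    hX.measureReal_setOf_eq_one_of_initial hα.le (by linarith) (by positivity)
      (by rw [measureReal_def, hinit, ENNReal.toReal_ofReal hπ₀.le]) (k + τ)
  have markov (b : ℕ) := by
    simpa only [ENNReal.toReal_mul, ← measureReal_def] using
      congrArg ENNReal.toReal (hX.measure_inter_inter_mul_eq hAm hAd hB (b := b))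
  have hdev : |μ.real (A ∩ {ω | X k ω = 1}) - α / (α + β) * μ.real A| ≤ 1 :=
    abs_sub_le_of_nonneg_of_le measureReal_nonneg measureReal_le_one
      (mul_nonneg hπ₀.le measureReal_nonneg)
      (mul_le_one₀ hπ₁.le measureReal_nonneg measureReal_le_one)
  calc |μ.real (A ∩ B) - μ.real A * μ.real B|
      ≤ |μ.real (A ∩ {ω | X (k + τ) ω = 1}) - μ.real A * μ.real {ω | X (k + τ) ω = 1}| :=
        abs_measureReal_inter_sub_mul_le_of_condIndep hAm hBm (hX.measurableSet_setOf_eq _ 1)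
          (hS ▸ hπ₀) (hS ▸ hπ₁) (markov 1) (by simpa only [hX.setOf_eq_zero] using markov 0)
    _ = (1 - α - β) ^ τ * |μ.real (A ∩ {ω | X k ω = 1}) - α / (α + β) * μ.real A| := by
        rw [hS, mul_comm (μ.real A), hX.measureReal_inter_sub_eq_pow_mul hα.le (by linarith)
          (by positivity) hAm (DeterminedUpTo.of_measurableSet_past hA), abs_mul,
          abs_of_nonneg (pow_nonneg (by linarith) τ)]
    _ ≤ (1 - α - β) ^ τ := mul_le_of_le_one_right (pow_nonneg (by linarith) τ) hdev
end
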